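/- Let d, k ≥ 2. For ℓ = 2, 3, …, 2k set W_ℓ = ⋃_{i+j=ℓ} A_i × A_j ⊆ F(ℝ^d,k) × F(ℝ^d,k). Then the sets W_2, …, W_{2k} are pairwise disjoint, their union is all of F(ℝ^d,k) × F(ℝ^d,k), and each W_ℓ admits a continuous section of the evaluation map e_2 : P(F(ℝ^d,k)) → F(ℝ^d,k)^2. In particular, F(ℝ^d,k)^2 can be partitioned into 2k−1 subsets, each admitting a continuous motion planning algorithm. -/

import Mathlib

open unitInterval

noncomputable section

/-- Euclidean space ℝ^d. -/
abbrev E (d : ℕ) : Type := EuclideanSpace ℝ (Fin d)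

/-- The ordered configuration space F(ℝ^d, k) of k distinct points in ℝ^d,
viewed as the subspace of (ℝ^d)^k of injective tuples. -/
def Conf (d k : ℕ) : Set (Fin k → E d) := {x | Function.Injective x}

/-- The time i/(n-1) ∈ [0,1] at which the i-th configuration is visited. -/
def eTime (n : ℕ) (i : Fin n) : unitInterval :=
  Set.projIcc 0 1 zero_le_one ((i : ℝ) / ((n : ℝ) - 1))

/-- The evaluation map e_n : P(X) → X^n,
e_n(γ) = (γ(0), γ(1/(n-1)), …, γ((n-2)/(n-1)), γ(1)). -/
def evalMap {X : Type*} [TopologicalSpace X] (n : ℕ) (γ : C(unitInterval, X)) : Fin n → X :=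
  fun i => γ (eTime n i)

/-- `A ⊆ X^n` admits a continuous section of the evaluation map e_n. -/
def HasSec {X : Type*} [TopologicalSpace X] (n : ℕ) (A : Set (Fin n → X)) : Prop :=
  ∃ s : A → C(unitInterval, X), Continuous s ∧ ∀ a : A, evalMap n (s a) = (a : Fin n → X)

/-- The projection p : ℝ^d → ℝ^d onto the first coordinate axis. -/
def projL {d : ℕ} (x : E d) : E d :=
  (WithLp.equiv 2 (Fin d → ℝ)).symm fun j => if (j : ℕ) = 0 then x j else 0

/-- cp(C) = cardinality of {p(x_1),…,p(x_k)}. -/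
def cp {d k : ℕ} (C : Fin k → E d) : ℕ := (Set.range fun i => projL (C i)).ncard

/-- The product A_{j_1} × ⋯ × A_{j_n} ⊆ F(ℝ^d,k)^n. -/
def Aprod (d k n : ℕ) (jv : Fin n → ℕ) : Set (Fin n → ↥(Conf d k)) :=
  {C | ∀ s : Fin n, cp ((C s : Fin k → E d)) = jv s}

/-- W_ℓ = ⋃_{j_1+⋯+j_n=ℓ} A_{j_1} × ⋯ × A_{j_n}, the indices j_s ranging over
{1,…,k}. -/
def Wset (d k n ℓ : ℕ) : Set (Fin n → ↥(Conf d k)) :=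
  ⋃ (jv : Fin n → ℕ) (_ : (∀ s, 1 ≤ jv s ∧ jv s ≤ k) ∧ (∑ s, jv s) = ℓ),
    Aprod d k n jv

/-!
The number `cp C` of distinct first coordinates is lower semicontinuous in `C`. On `W_ℓ` the sum
`cp C + cp C'` is the constant `ℓ`, so both summands are locally constant there; hence the pattern
of coincidences among first coordinates is locally constant, and the least nonzero gap `δ(C)`
between first coordinates of `C` depends continuously on `(C, C') ∈ W_ℓ`.

Each configuration is then joined to a fixed configuration by three straight segments, depending
continuously on `C` and `δ(C)`: shifting the `r`-th point by `δ(C) · r / k` along the first axis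
makes all first coordinates distinct without a collision (the shifts differ by less than `δ(C)`);
the other coordinates are then moved to `(r, 0, …, 0)` with the first coordinates kept fixed,
and finally the first coordinates are moved to `0` with the second coordinates kept fixed. The
path from `C` followed by the reverse of the path from `C'` is the section over `W_ℓ`.
-/

open Set Filter Topology

section Gap
variable {ι : Type*}

def minDist (S : Finset (ι × ι)) (f : ι → ℝ) : ℝ := S.fold min 1 fun p => |f p.1 - f p.2|

lemma continuous_minDist (S : Finset (ι × ι)) : Continuous (minDist S) := by
  classical
  induction S using Finset.induction_on with
  | empty => exact continuous_const
  | insert p S hp ih =>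
    change Continuous fun f => minDist (insert p S) f
    simp only [minDist, Finset.fold_insert hp]
    exact (((continuous_apply p.1).sub (continuous_apply p.2)).abs).min ih

variable [Fintype ι]

def sepPairs (f : ι → ℝ) : Finset (ι × ι) := {p | f p.1 ≠ f p.2}

def gap (f : ι → ℝ) : ℝ := minDist (sepPairs f) f

lemma gap_pos (f : ι → ℝ) : 0 < gap f :=
  (Finset.lt_fold_min _).2 ⟨one_pos, fun p hp =>
    abs_pos.2 (sub_ne_zero.2 (by simpa [sepPairs] using hp))⟩

lemma gap_le_abs_sub {f : ι → ℝ} {r q : ι} (h : f r ≠ f q) : gap f ≤ |f r - f q| :=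
  (Finset.fold_min_le _).2 (Or.inr ⟨(r, q), by simpa [sepPairs], le_rfl⟩)

lemma eq_of_add_eq_add_of_abs_sub_lt_gap {f a : ι → ℝ} (ha : ∀ r q, |a r - a q| < gap f)
    {r q : ι} (h : f r + a r = f q + a q) : f r = f q ∧ a r = a q := by
  by_contra hne
  have hf : f r ≠ f q := fun hf => hne ⟨hf, by linarith⟩
  have := gap_le_abs_sub hf
  rw [show f r - f q = a q - a r by linarith, abs_sub_comm] at this
  exact (ha r q).not_ge this

lemma sepPairs_eq_of_factorsThrough {f g : ι → ℝ} (hfg : f.FactorsThrough g)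
    (hgf : g.FactorsThrough f) : sepPairs f = sepPairs g := by
  ext p
  simp only [sepPairs, Finset.mem_filter, Finset.mem_univ, true_and]
  exact ⟨mt fun h => hfg h, mt fun h => hgf h⟩

end Gap

section FactorsThrough
variable {α β γ : Type*} [Finite α] [Nonempty γ] {f : α → β} {g : α → γ}

lemma Function.FactorsThrough.ncard_range_le (h : g.FactorsThrough f) :
    (range g).ncard ≤ (range f).ncard := by
  obtain ⟨e, rfl⟩ := (Function.factorsThrough_iff g).1 h
  rw [range_comp]
  exact ncard_image_le (finite_range f)

lemma Function.FactorsThrough.factorsThrough_of_ncard_range_le (h : g.FactorsThrough f)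
    (hcard : (range f).ncard ≤ (range g).ncard) : f.FactorsThrough g := by
  obtain ⟨e, rfl⟩ := (Function.factorsThrough_iff g).1 h
  rw [range_comp] at hcard
  have hinj := injOn_of_ncard_image_eq (le_antisymm (ncard_image_le (finite_range f)) hcard)
    (finite_range f)
  exact fun a b hab => hinj (mem_range_self a) (mem_range_self b) hab

end FactorsThrough

lemma eventually_factorsThrough {ι X : Type*} [Finite ι] [TopologicalSpace X] [T2Space X]
    (f : ι → X) : ∀ᶠ g in 𝓝 f, f.FactorsThrough g := by
  simp only [Function.FactorsThrough, eventually_all]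
  intro a b
  by_cases h : f a = f b
  · exact Eventually.of_forall fun _ _ => h
  · filter_upwards [(isOpen_ne_fun (f := fun g : ι → X => g a) (g := fun g => g b)
      (continuous_apply a) (continuous_apply b)).mem_nhds h]
      with g hg hab using absurd hab hg

lemma ContinuousAt.gap_comp {ι Y : Type*} [Fintype ι] [TopologicalSpace Y] {φ : Y → ι → ℝ}
    {y₀ : Y} (hφ : ContinuousAt φ y₀)
    (hcard : ∀ᶠ y in 𝓝 y₀, (range (φ y)).ncard ≤ (range (φ y₀)).ncard) :
    ContinuousAt (fun y => gap (φ y)) y₀ := by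
  have hpairs : ∀ᶠ y in 𝓝 y₀, sepPairs (φ y) = sepPairs (φ y₀) := by
    filter_upwards [hφ.eventually (eventually_factorsThrough (φ y₀)), hcard] with y h₀ hy
    exact (sepPairs_eq_of_factorsThrough h₀ (h₀.factorsThrough_of_ncard_range_le hy)).symm
  refine ((continuous_minDist (sepPairs (φ y₀))).continuousAt.comp hφ).congr ?_
  filter_upwards [hpairs] with y hy
  simp only [Function.comp_apply, gap, hy]

lemma hasSec_two_of_paths {X : Type*} [TopologicalSpace X] {U : Set (Fin 2 → X)} {x₀ : X}
    (γ : ∀ s : Fin 2, ∀ a : U, Path ((a : Fin 2 → X) s) x₀) (hγ : ∀ s, Continuous ↿(γ s)) :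
    HasSec 2 U := by
  refine ⟨fun a => ((γ 0 a).trans (γ 1 a).symm).toContinuousMap,
    ContinuousMap.continuous_of_continuous_uncurry _ ?_, fun a => funext fun s => ?_⟩
  · exact Path.trans_continuous_family _ (hγ 0) _ (Path.symm_continuous_family _ (hγ 1))
  · fin_cases s <;> norm_num [evalMap, eTime]

section Segment
variable {V : Type*} [AddCommGroup V] [Module ℝ V] [TopologicalSpace V]
  [IsTopologicalAddGroup V] [ContinuousSMul ℝ V] {S : Set V}

def Path.segmentIn {x y : V} (h : ∀ t : I, AffineMap.lineMap x y (t : ℝ) ∈ S) :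
    Path (⟨x, by simpa using h 0⟩ : S) ⟨y, by simpa using h 1⟩ where
  toFun t := ⟨Path.segment x y t, h t⟩
  continuous_toFun := (Path.segment x y).continuous.subtype_mk _
  source' := by ext; simp
  target' := by ext; simp

lemma Path.segmentIn_continuous_family {Y : Type*} [TopologicalSpace Y] {x y : Y → V}
    (hx : Continuous x) (hy : Continuous y)
    (h : ∀ a, ∀ t : I, AffineMap.lineMap (x a) (y a) (t : ℝ) ∈ S) :
    Continuous ↿fun a => Path.segmentIn (h a) :=
  ((hx.comp continuous_fst).lineMap (hy.comp continuous_fst)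
    (continuous_subtype_val.comp continuous_snd)).subtype_mk _

end Segment

lemma injective_lineMap_of_comp_eq {ι V W : Type*} [AddCommGroup V] [Module ℝ V]
    [AddCommGroup W] [Module ℝ W] (L : V →ₗ[ℝ] W) {x y : ι → V} (hxy : ∀ r, L (x r) = L (y r))
    (hx : Function.Injective (L ∘ x)) (t : ℝ) :
    Function.Injective (AffineMap.lineMap x y t : ι → V) := by
  have hL : ∀ r, L ((AffineMap.lineMap x y t : ι → V) r) = L (x r) := fun r => by
    rw [AffineMap.pi_lineMap_apply, ← L.coe_toAffineMap, AffineMap.apply_lineMap,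
      L.coe_toAffineMap, hxy, AffineMap.lineMap_same_apply]
  exact fun r q h => hx (by simpa only [Function.comp_apply, hL] using congrArg L h)

section ConfigurationSpace
variable {d k : ℕ}

lemma continuous_projL : Continuous (projL : E d → E d) :=
  (PiLp.continuous_toLp 2 _).comp <| continuous_pi fun j => by
    split_ifs
    exacts [PiLp.continuous_apply 2 _ j, continuous_const]

lemma cp_le (C : Fin k → E d) : cp C ≤ k := by
  rw [cp, ← image_univ]
  exact (ncard_image_le (toFinite _)).trans (by simp)

lemma one_le_cp (hk : 1 ≤ k) (C : Fin k → E d) : 1 ≤ cp C :=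
  (ncard_pos (finite_range _)).2 (range_nonempty_iff_nonempty.2 ⟨⟨0, hk⟩⟩)

lemma eventually_cp_le_cp (C : Fin k → E d) : ∀ᶠ C' in 𝓝 C, cp C ≤ cp C' := by
  have hproj : Continuous fun C : Fin k → E d => fun r => projL (C r) :=
    continuous_pi fun r => continuous_projL.comp (continuous_apply r)
  filter_upwards [hproj.continuousAt.eventually (eventually_factorsThrough _)] with C' h
  exact h.ncard_range_le

lemma cp_eq_ncard_range (i : Fin d) (hi : (i : ℕ) = 0) (C : Fin k → E d) :
    cp C = (range fun r => C r i).ncard := by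
  set ψ : ℝ → E d := fun v =>
    (WithLp.equiv 2 (Fin d → ℝ)).symm fun j => if (j : ℕ) = 0 then v else 0
  have hψ : ψ.Injective := fun v w h => by simpa [ψ, hi] using congrArg (· i) h
  have hproj : ∀ x : E d, projL x = ψ (x i) := fun x => by
    ext j
    by_cases hj : (j : ℕ) = 0
    · simp [projL, ψ, show j = i from Fin.ext (hj.trans hi.symm)]
    · simp [projL, ψ, hj]
  simp only [cp, hproj]
  rw [show (fun r => ψ (C r i)) = ψ ∘ fun r => C r i from rfl, range_comp,
    ncard_image_of_injective _ hψ]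

lemma cp_add_cp_eq_of_mem_Wset {ℓ : ℕ} {a : Fin 2 → Conf d k} (ha : a ∈ Wset d k 2 ℓ) :
    cp (a 0 : Fin k → E d) + cp (a 1 : Fin k → E d) = ℓ := by
  simp only [Wset, Aprod, mem_iUnion, mem_ofPred_eq] at ha
  obtain ⟨jv, ⟨-, hsum⟩, hjv⟩ := ha
  rw [hjv 0, hjv 1, ← hsum, Fin.sum_univ_two]

lemma mem_Wset_cp_add_cp (hk : 1 ≤ k) (a : Fin 2 → Conf d k) :
    a ∈ Wset d k 2 (cp (a 0 : Fin k → E d) + cp (a 1 : Fin k → E d)) := by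
  simp only [Wset, Aprod, mem_iUnion, mem_ofPred_eq]
  exact ⟨fun s => cp (a s : Fin k → E d),
    ⟨fun s => ⟨one_le_cp hk _, cp_le _⟩, Fin.sum_univ_two _⟩, fun s => rfl⟩

lemma continuous_Wset_apply (ℓ : ℕ) (s : Fin 2) :
    Continuous fun a : Wset d k 2 ℓ => (a : Fin 2 → Conf d k) s :=
  (continuous_apply s).comp continuous_subtype_val

lemma eventually_cp_le_of_mem_Wset {ℓ : ℕ} (a : Wset d k 2 ℓ) (s : Fin 2) :
    ∀ᶠ b : Wset d k 2 ℓ in 𝓝 a, cp ((b : Fin 2 → Conf d k) s : Fin k → E d) ≤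
      cp ((a : Fin 2 → Conf d k) s : Fin k → E d) := by
  have hcont : ∀ s',
      Continuous fun b : Wset d k 2 ℓ => ((b : Fin 2 → Conf d k) s' : Fin k → E d) :=
    fun s' => continuous_subtype_val.comp (continuous_Wset_apply ℓ s')
  filter_upwards [(hcont 0).continuousAt.eventually (eventually_cp_le_cp _),
    (hcont 1).continuousAt.eventually (eventually_cp_le_cp _)] with b h₀ h₁
  have hb := cp_add_cp_eq_of_mem_Wset b.2
  have ha := cp_add_cp_eq_of_mem_Wset a.2
  fin_cases s <;> simp only [Fin.zero_eta, Fin.mk_one] <;> omega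

lemma continuous_gap_coord_Wset (i : Fin d) (hi : (i : ℕ) = 0) (ℓ : ℕ) (s : Fin 2) :
    Continuous fun a : Wset d k 2 ℓ =>
      gap fun r => ((a : Fin 2 → Conf d k) s : Fin k → E d) r i := by
  have hcoord : Continuous fun (a : Wset d k 2 ℓ) r =>
      ((a : Fin 2 → Conf d k) s : Fin k → E d) r i :=
    continuous_pi fun r => (PiLp.continuous_apply 2 _ i).comp <| (continuous_apply r).comp <|
      continuous_subtype_val.comp <| continuous_Wset_apply ℓ s
  refine continuous_iff_continuousAt.2 fun a => hcoord.continuousAt.gap_comp ?_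
  simpa only [← cp_eq_ncard_range i hi] using eventually_cp_le_of_mem_Wset a s

end ConfigurationSpace

section Contraction
variable {d k : ℕ} (i j : Fin d)

def spread (C : Fin k → E d) : Fin k → E d :=
  fun r => C r + (gap (fun q => C q i) * (r / k)) • EuclideanSpace.single i 1

def flatten (C : Fin k → E d) : Fin k → E d :=
  fun r => C r i • EuclideanSpace.single i 1 + (r : ℝ) • EuclideanSpace.single j 1

def stdConf : Fin k → E d := fun r => (r : ℝ) • EuclideanSpace.single j 1

lemma abs_mul_div_sub_lt {δ t : ℝ} (hδ : 0 < δ) (ht : t ∈ I) (r q : Fin k) :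
    |t * (δ * (r / k)) - t * (δ * (q / k))| < δ := by
  have hk : (0 : ℝ) < k := by exact_mod_cast r.pos
  have hr : (r : ℝ) < k := by exact_mod_cast r.isLt
  have hq : (q : ℝ) < k := by exact_mod_cast q.isLt
  have hrq : |(r / k : ℝ) - q / k| < 1 := by
    rw [abs_sub_lt_iff, ← sub_div, ← sub_div, div_lt_one hk, div_lt_one hk]
    constructor <;> linarith [(r : ℕ).cast_nonneg (α := ℝ), (q : ℕ).cast_nonneg (α := ℝ)]
  calc |t * (δ * (r / k)) - t * (δ * (q / k))| = t * (δ * |(r / k : ℝ) - q / k|) := by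
        rw [← mul_sub, ← mul_sub, abs_mul, abs_mul, abs_of_nonneg ht.1, abs_of_pos hδ]
    _ ≤ δ * |(r / k : ℝ) - q / k| :=
        mul_le_of_le_one_left (mul_nonneg hδ.le (abs_nonneg _)) ht.2
    _ < δ := mul_lt_of_lt_one_right hδ hrq

lemma lineMap_spread_mem {C : Fin k → E d} (hC : C ∈ Conf d k) (t : I) :
    AffineMap.lineMap C (spread i C) (t : ℝ) ∈ Conf d k := by
  set δ := gap fun q => C q i
  have hline : ∀ r, (AffineMap.lineMap C (spread i C) (t : ℝ) : Fin k → E d) r =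
      C r + (t * (δ * (r / k))) • EuclideanSpace.single i 1 := fun r => by
    simp [AffineMap.lineMap_apply_module', spread, smul_smul, add_comm, δ]
  intro r q h
  simp only [hline] at h
  have hcoord : C r i + t * (δ * (r / k)) = C q i + t * (δ * (q / k)) := by
    simpa using congrArg (· i) h
  obtain ⟨-, ha⟩ := eq_of_add_eq_add_of_abs_sub_lt_gap (f := fun q => C q i)
    (a := fun q => t * (δ * (q / k))) (fun r q => abs_mul_div_sub_lt (gap_pos _) t.2 r q)
    hcoord
  rw [ha, add_left_inj] at h
  exact hC h

lemma spread_apply_self (C : Fin k → E d) (r : Fin k) :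
    spread i C r i = C r i + gap (fun q => C q i) * (r / k) := by
  simp [spread]

lemma injective_spread_apply_self (C : Fin k → E d) :
    Function.Injective fun r => spread i C r i := by
  intro r q h
  have hδ := gap_pos fun q => C q i
  obtain ⟨-, ha⟩ := eq_of_add_eq_add_of_abs_sub_lt_gap (f := fun q => C q i)
    (a := fun q => 1 * (gap (fun q => C q i) * (q / k)))
    (fun r q => abs_mul_div_sub_lt hδ ⟨zero_le_one, le_rfl⟩ r q)
    (by simpa only [spread_apply_self, one_mul] using h)
  have hk : (k : ℝ) ≠ 0 := by exact_mod_cast r.pos.ne'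
  simp only [one_mul, mul_right_inj' hδ.ne', div_left_inj' hk, Nat.cast_inj] at ha
  exact Fin.ext ha

lemma stdConf_mem : (stdConf j : Fin k → E d) ∈ Conf d k := fun r q h =>
  Fin.ext <| by simpa [stdConf] using congrArg (· j) h

variable {i j}

lemma lineMap_spread_flatten_mem (hij : i ≠ j) (C : Fin k → E d) (t : I) :
    AffineMap.lineMap (spread i C) (flatten i j (spread i C)) (t : ℝ) ∈ Conf d k :=
  injective_lineMap_of_comp_eq (EuclideanSpace.proj i : E d →L[ℝ] ℝ).toLinearMap
    (fun r => by simp [flatten, hij]) (injective_spread_apply_self i C) t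

lemma lineMap_flatten_stdConf_mem (hij : i ≠ j) (C : Fin k → E d) (t : I) :
    AffineMap.lineMap (flatten i j C) (stdConf j) (t : ℝ) ∈ Conf d k :=
  injective_lineMap_of_comp_eq (EuclideanSpace.proj j : E d →L[ℝ] ℝ).toLinearMap
    (fun r => by simp [flatten, stdConf, hij])
    (fun r q h => Fin.ext <| by simpa [flatten, hij] using h) t

def pathToStdConf (hij : i ≠ j) (C : Conf d k) : Path C ⟨stdConf j, stdConf_mem j⟩ :=
  (Path.segmentIn (lineMap_spread_mem i C.2)).trans
    ((Path.segmentIn (lineMap_spread_flatten_mem hij C.1)).trans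
      (Path.segmentIn (lineMap_flatten_stdConf_mem hij (spread i C.1))))

lemma pathToStdConf_continuous_family (hij : i ≠ j) {Y : Type*} [TopologicalSpace Y]
    {φ : Y → Conf d k} (hφ : Continuous φ)
    (hgap : Continuous fun y => gap fun r => (φ y : Fin k → E d) r i) :
    Continuous ↿fun y => pathToStdConf hij (φ y) := by
  have hC : Continuous fun y => (φ y : Fin k → E d) := continuous_subtype_val.comp hφ
  have hspread : Continuous fun y => spread i (φ y : Fin k → E d) :=
    continuous_pi fun r => ((continuous_apply r).comp hC).add
      ((hgap.mul continuous_const).smul continuous_const)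
  have hflatten : Continuous fun y => flatten i j (spread i (φ y : Fin k → E d)) :=
    continuous_pi fun r => (((PiLp.continuous_apply 2 _ i).comp ((continuous_apply r).comp
      hspread)).smul continuous_const).add continuous_const
  exact Path.trans_continuous_family _ (Path.segmentIn_continuous_family hC hspread _) _
    (Path.trans_continuous_family _ (Path.segmentIn_continuous_family hspread hflatten _) _
      (Path.segmentIn_continuous_family hflatten continuous_const _))

end Contraction

/-- For d, k ≥ 2, the 2k-1 sets W_ℓ = ⋃_{i+j=ℓ} A_i × A_j,
ℓ = 2,…,2k, are pairwise disjoint, cover F(ℝ^d,k)², and each admits a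
continuous section of e_2 : P(F(ℝ^d,k)) → F(ℝ^d,k)². -/
theorem stmt9 (d k : ℕ) (hd : 2 ≤ d) (hk : 2 ≤ k) :
    (∀ ℓ ∈ Set.Icc 2 (2 * k), ∀ ℓ' ∈ Set.Icc 2 (2 * k), ℓ ≠ ℓ' →
      Disjoint (Wset d k 2 ℓ) (Wset d k 2 ℓ')) ∧
    (⋃ ℓ ∈ Set.Icc 2 (2 * k), Wset d k 2 ℓ) = Set.univ ∧
    (∀ ℓ ∈ Set.Icc 2 (2 * k), HasSec 2 (Wset d k 2 ℓ)) := by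
  let i : Fin d := ⟨0, by omega⟩
  let j : Fin d := ⟨1, by omega⟩
  have hij : i ≠ j := by simp [i, j]
  refine ⟨fun ℓ _ ℓ' _ hne => Set.disjoint_left.2 fun a ha ha' => hne ?_, ?_, fun ℓ _ => ?_⟩
  · rw [← cp_add_cp_eq_of_mem_Wset ha, cp_add_cp_eq_of_mem_Wset ha']
  · refine Set.eq_univ_of_forall fun a =>
      Set.mem_iUnion₂.2 ⟨_, ?_, mem_Wset_cp_add_cp (by omega) a⟩
    have := one_le_cp (by omega) (a 0 : Fin k → E d)
    have := one_le_cp (by omega) (a 1 : Fin k → E d)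
    have := cp_le (a 0 : Fin k → E d)
    have := cp_le (a 1 : Fin k → E d)
    constructor <;> omega
  · exact hasSec_two_of_paths (fun s a => pathToStdConf hij ((a : Fin 2 → Conf d k) s)) fun s =>
      pathToStdConf_continuous_family hij (continuous_Wset_apply ℓ s)
        (continuous_gap_coord_Wset i rfl ℓ s)
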